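/- Let κ be an infinite cardinal and α a cardinal with 2 ≤ α ≤ κ. If either log(κ) < κ (where log(κ) := min{γ : 2^γ ≥ κ}) or κ is a regular strong limit cardinal, then: (a) 2^{<κ} = α^{<κ} = κ^{<κ}; and (b) d(((D(α))^κ)_κ) = 2^{<κ} = α^{<κ} = κ^{<κ}. -/

import Mathlib

/-!
Under either hypothesis, `κ ^ μ ≤ 2 ^< κ` for all `μ < κ`: if `κ ≤ 2 ^ λ` with `λ < κ` then
`κ ^ μ ≤ 2 ^ (λ * μ)`; if `κ` is a regular strong limit, every `f : μ → κ` takes values in a set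
of size `< κ`, there are only `κ` such sets, and each contributes fewer than `κ` functions.
Monotonicity of `a ↦ a ^< κ` then squeezes `2 ^< κ ≤ α ^< κ ≤ κ ^< κ`.

In the `κ`-box topology a dense set meets each of the `α ^ μ` pairwise disjoint boxes prescribing
the values on `μ < κ` fixed coordinates, so the density is at least `α ^< κ`. Conversely the
points that differ from a fixed point in fewer than `κ` coordinates form a dense set of size at
most `κ ^< κ * α ^< κ`.
-/

open Cardinal TopologicalSpace Set

universe u

/-- The `κ`-box topology on a product of topological spaces: generated by the boxes
`Π i, U i` with each `U i` open and fewer than `κ` coordinates restricted. -/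
def boxTopology (κ : Cardinal.{u}) {ι : Type u} (X : ι → Type u)
    [∀ i, TopologicalSpace (X i)] : TopologicalSpace (∀ i, X i) :=
  TopologicalSpace.generateFrom
    {S | ∃ U : ∀ i, Set (X i), (∀ i, IsOpen (U i)) ∧
      #{i | U i ≠ Set.univ} < κ ∧ S = Set.pi Set.univ U}

/-- The density character of a topological space: the least cardinality of a dense subset
(finite values allowed). -/
noncomputable def dens (X : Type u) [TopologicalSpace X] : Cardinal.{u} :=
  sInf {c | ∃ D : Set X, Dense D ∧ #D = c}

/-- `log β`: the least cardinal `γ` with `2 ^ γ ≥ β`. -/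
noncomputable def clog (β : Cardinal.{u}) : Cardinal.{u} :=
  sInf {γ | β ≤ 2 ^ γ}

namespace Cardinal

theorem powerlt_le_powerlt_right {a b c : Cardinal.{u}} (h : a ≤ b) : a ^< c ≤ b ^< c :=
  powerlt_le.2 fun _ hx => (power_le_power_right h).trans (le_powerlt _ hx)

theorem le_two_powerlt (κ : Cardinal.{u}) : κ ≤ 2 ^< κ := by
  by_contra! h
  exact (cantor _).not_ge (le_powerlt 2 h)

theorem le_two_power_clog (κ : Cardinal.{u}) : κ ≤ 2 ^ clog κ :=
  csInf_mem (s := {γ | κ ≤ 2 ^ γ}) ⟨κ, (cantor κ).le⟩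

theorem powerlt_self_le_two_powerlt_of_clog_lt {κ : Cardinal.{u}} (hκ : ℵ₀ ≤ κ)
    (h : clog κ < κ) : κ ^< κ ≤ 2 ^< κ :=
  powerlt_le.2 fun μ hμ =>
    calc κ ^ μ ≤ (2 ^ clog κ) ^ μ := power_le_power_right (le_two_power_clog κ)
      _ = 2 ^ (clog κ * μ) := power_mul.symm
      _ ≤ 2 ^< κ := le_powerlt 2 (mul_lt_of_lt hκ h hμ)

theorem power_le_self_of_lt_cof {κ μ : Cardinal.{u}} (hκ : κ.IsStrongLimit)
    (hμ : μ < κ.ord.cof) : κ ^ μ ≤ κ := by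
  induction κ using Cardinal.inductionOn with | _ K
  induction μ using Cardinal.inductionOn with | _ L
  have hK := hκ.aleph0_le
  let small := {s : Set K // #s < (#K).ord.cof}
  let valuedIn (s : small) : Set (L → K) := range fun g : L → s.1 => Subtype.val ∘ g
  have hcover : ⋃ s, valuedIn s = Set.univ := by
    refine eq_univ_of_forall fun f => mem_iUnion.2 ⟨⟨range f, mk_range_le.trans_lt hμ⟩, ?_⟩
    exact ⟨rangeFactorization f, rfl⟩
  have hpiece (s : small) : #(valuedIn s) ≤ #K :=
    calc #(valuedIn s) ≤ #s.1 ^ #L := mk_range_le.trans (power_def _ _).ge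
      _ ≤ (2 ^ #s.1) ^ #L := power_le_power_right (cantor _).le
      _ = 2 ^ (#s.1 * #L) := power_mul.symm
      _ ≤ #K := (hκ.isStrongPrelimit (mul_lt_of_lt hK
          (s.2.trans_le (Ordinal.cof_ord_le _)) (hμ.trans_le (Ordinal.cof_ord_le _)))).le
  calc #K ^ #L = #(⋃ s, valuedIn s) := by rw [hcover, mk_univ, power_def]
    _ ≤ #small * ⨆ s, #(valuedIn s) := mk_iUnion_le _
    _ ≤ #K * #K := mul_le_mul' (mk_subset_mk_lt_cof hκ.isStrongPrelimit).le (ciSup_le' hpiece)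
    _ = #K := mul_eq_self hK

theorem powerlt_self_le_two_powerlt_of_isRegular {κ : Cardinal.{u}} (hreg : κ.IsRegular)
    (hsl : κ.IsStrongLimit) : κ ^< κ ≤ 2 ^< κ :=
  powerlt_le.2 fun _ hμ =>
    (power_le_self_of_lt_cof hsl (hreg.cof_ord.symm ▸ hμ)).trans (le_two_powerlt κ)

theorem mk_subset_mk_lt_le_powerlt (K : Type u) [Infinite K] :
    #{s : Set K // #s < #K} ≤ #K ^< #K := by
  have hK := aleph0_le_mk K
  have hcover : {s : Set K | #s < #K} ⊆ ⋃ i : (#K).ord.ToType, {s | #s ≤ #(Iio i)} := by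
    intro s hs
    obtain ⟨i, hi⟩ := Ordinal.typein_surj (α := (#K).ord.ToType) (· < ·)
      (o := (#s).ord) (by rw [Ordinal.type_toType]; exact ord_lt_ord.2 hs)
    refine mem_iUnion.2 ⟨i, ?_⟩
    have := Ordinal.card_typein (r := ((· < ·) : (#K).ord.ToType → _ → Prop)) i
    rw [hi, card_ord] at this
    exact this.le
  have hK_le : #K ≤ #K ^< #K := by
    simpa using le_powerlt (#K) (one_lt_aleph0.trans_le hK)
  calc #{s : Set K // #s < #K} ≤ #(⋃ i : (#K).ord.ToType, {s : Set K | #s ≤ #(Iio i)}) :=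
        mk_le_mk_of_subset hcover
    _ ≤ #(#K).ord.ToType * ⨆ i : (#K).ord.ToType, #{s : Set K | #s ≤ #(Iio i)} := mk_iUnion_le _
    _ ≤ #K ^< #K * #K ^< #K := by
        refine mul_le_mul' (by rw [mk_ord_toType]; exact hK_le) (ciSup_le' fun i => ?_)
        exact (mk_bounded_set_le_of_infinite K _).trans
          (le_powerlt _ ((mk_Iio_lt i (by simp)).trans_eq (mk_ord_toType _)))
    _ = #K ^< #K := mul_eq_self (hK.trans hK_le)

end Cardinal

section BoxTopology

variable {ι : Type u} {X : ι → Type u} [∀ i, TopologicalSpace (X i)]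

theorem isTopologicalBasis_boxTopology {κ : Cardinal.{u}} (hκ : ℵ₀ ≤ κ) :
    @IsTopologicalBasis (∀ i, X i) (boxTopology κ X)
      {S | ∃ U : ∀ i, Set (X i), (∀ i, IsOpen (U i)) ∧
        #{i | U i ≠ Set.univ} < κ ∧ S = Set.pi Set.univ U} := by
  let := boxTopology κ X
  refine ⟨?_, ?_, rfl⟩
  · rintro _ ⟨U, hU, hUκ, rfl⟩ _ ⟨V, hV, hVκ, rfl⟩ x hx
    have hsub : {i | U i ∩ V i ≠ Set.univ} ⊆ {i | U i ≠ Set.univ} ∪ {i | V i ≠ Set.univ} := by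
      intro i hi
      by_contra! h
      simp_all
    refine ⟨_, ⟨fun i => U i ∩ V i, fun i => (hU i).inter (hV i),
      ((mk_le_mk_of_subset hsub).trans (mk_union_le _ _)).trans_lt (add_lt_of_lt hκ hUκ hVκ),
      rfl⟩, by rwa [pi_inter_distrib], by rw [pi_inter_distrib]⟩
  · refine sUnion_eq_univ_iff.2 fun x => ⟨Set.univ, ⟨fun _ => Set.univ, fun _ => isOpen_univ,
      ?_, pi_univ _ |>.symm⟩, trivial⟩
    simpa using aleph0_pos.trans_le hκ

def sigmaProduct (κ : Cardinal.{u}) (a : ∀ i, X i) : Set (∀ i, X i) :=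
  {f | #{i | f i ≠ a i} < κ}

theorem dense_sigmaProduct {κ : Cardinal.{u}} (hκ : ℵ₀ ≤ κ) (a : ∀ i, X i) :
    @Dense _ (boxTopology κ X) (sigmaProduct κ a) := by
  classical
  let := boxTopology κ X
  rw [(isTopologicalBasis_boxTopology hκ).dense_iff]
  rintro _ ⟨U, hU, hUκ, rfl⟩ ⟨g, hg⟩
  refine ⟨fun i => if U i = Set.univ then a i else g i, fun i _ => ?_, ?_⟩
  · dsimp only
    split_ifs with h
    · simp [h]
    · exact hg i trivial
  · refine (mk_le_mk_of_subset fun i hi h => ?_).trans_lt hUκ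
    exact hi (if_pos h)

end BoxTopology

section ConstantFamily

variable {K A : Type u}

theorem mk_sigmaProduct_le (κ : Cardinal.{u}) (a : K → A) :
    #(sigmaProduct κ a) ≤ #{s : Set K // #s < κ} * #A ^< κ := by
  let small := {s : Set K // #s < κ}
  let agreeOff (s : small) : Set (K → A) := {f | ∀ i ∉ s.1, f i = a i}
  have hcover : sigmaProduct κ a ⊆ ⋃ s, agreeOff s :=
    fun f hf => mem_iUnion.2 ⟨⟨_, hf⟩, fun i hi => not_not.1 hi⟩
  have hpiece (s : small) : #(agreeOff s) ≤ #A ^< κ := by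
    have hinj : Function.Injective fun (f : agreeOff s) (i : s.1) => f.1 i := by
      refine fun f g hfg => Subtype.ext (funext fun i => ?_)
      by_cases hi : i ∈ s.1
      · exact congrFun hfg ⟨i, hi⟩
      · rw [f.2 i hi, g.2 i hi]
    calc #(agreeOff s) ≤ #(s.1 → A) := mk_le_of_injective hinj
      _ = #A ^ #s.1 := (power_def _ _).symm
      _ ≤ #A ^< κ := le_powerlt _ s.2
  calc #(sigmaProduct κ a) ≤ #(⋃ s, agreeOff s) := mk_le_mk_of_subset hcover
    _ ≤ #small * ⨆ s, #(agreeOff s) := mk_iUnion_le _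
    _ ≤ #small * #A ^< κ := mul_le_mul' le_rfl (ciSup_le' hpiece)

theorem powerlt_le_mk_of_dense [TopologicalSpace A] [DiscreteTopology A] [Nonempty A]
    {κ : Cardinal.{u}} (hκ : κ ≤ #K) {D : Set (K → A)}
    (hD : @Dense _ (boxTopology κ fun _ => A) D) : #A ^< κ ≤ #D := by
  classical
  let := boxTopology κ fun _ : K => A
  refine powerlt_le.2 fun μ hμ => ?_
  obtain ⟨S, rfl⟩ := le_mk_iff_exists_set.1 (hμ.le.trans hκ)
  obtain ⟨a⟩ := ‹Nonempty A›
  let box (g : S → A) (i : K) : Set A := if h : i ∈ S then {g ⟨i, h⟩} else Set.univ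
  have hbox (g : S → A) : (Set.pi Set.univ (box g) ∩ D).Nonempty := by
    refine hD.inter_open_nonempty _ (isOpen_generateFrom_of_mem
      ⟨box g, fun _ => isOpen_discrete _, ?_, rfl⟩) ⟨fun i => if h : i ∈ S then g ⟨i, h⟩ else a, ?_⟩
    · refine (mk_le_mk_of_subset fun i hi => ?_).trans_lt hμ
      by_contra h
      exact hi (dif_neg h)
    · intro i _
      by_cases h : i ∈ S <;> simp [box, h]
  choose F hFbox hFD using hbox
  have hFS (g : S → A) (s : S) : F g s = g s := by simpa [box] using hFbox g s trivial
  calc #A ^ #S = #(S → A) := power_def _ _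
    _ ≤ #D := mk_le_of_injective (f := fun g => (⟨F g, hFD g⟩ : D)) fun g g' h =>
      funext fun s => by
        rw [← hFS g, ← hFS g', show F g = F g' from congrArg Subtype.val h]

end ConstantFamily

theorem dens_le_mk {X : Type u} [TopologicalSpace X] {D : Set X} (hD : Dense D) :
    dens X ≤ #D :=
  csInf_le' ⟨D, hD, rfl⟩

theorem le_dens {X : Type u} [TopologicalSpace X] {c : Cardinal.{u}}
    (h : ∀ D : Set X, Dense D → c ≤ #D) : c ≤ dens X :=
  le_csInf ⟨_, Set.univ, dense_univ, rfl⟩ fun _ ⟨D, hD, hc⟩ => hc ▸ h D hD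

theorem stmt9 (α κ : Cardinal.{u}) (hκ : ℵ₀ ≤ κ) (hα2 : 2 ≤ α) (hακ : α ≤ κ)
    (h : clog κ < κ ∨ (κ.IsRegular ∧ κ.IsStrongLimit))
    (A K : Type u) [TopologicalSpace A] [DiscreteTopology A]
    (hA : #A = α) (hK : #K = κ) :
    ((2 : Cardinal.{u}) ^< κ = α ^< κ ∧ α ^< κ = κ ^< κ) ∧
    @dens (∀ _ : K, A) (boxTopology κ fun _ => A) = (2 : Cardinal.{u}) ^< κ := by
  subst hA hK
  have : Infinite K := infinite_iff.2 hκ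
  have : Nonempty A := (one_lt_iff_nontrivial.1 (Cardinal.one_lt_two.trans_le hα2)).to_nonempty
  obtain ⟨a⟩ := ‹Nonempty A›
  have hK2 : #K ^< #K ≤ 2 ^< #K := h.elim (powerlt_self_le_two_powerlt_of_clog_lt hκ)
    fun h => powerlt_self_le_two_powerlt_of_isRegular h.1 h.2
  have h2A : 2 ^< #K ≤ #A ^< #K := powerlt_le_powerlt_right hα2
  have hAK : #A ^< #K ≤ #K ^< #K := powerlt_le_powerlt_right hακ
  have h2A_eq : 2 ^< #K = #A ^< #K := le_antisymm h2A (hAK.trans hK2)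
  have hAK_eq : #A ^< #K = #K ^< #K := le_antisymm hAK (hK2.trans h2A)
  refine ⟨⟨h2A_eq, hAK_eq⟩, le_antisymm ?_ ?_⟩
  · calc _ ≤ #(sigmaProduct (#K) fun _ : K => a) :=
          @dens_le_mk _ (boxTopology _ _) _ (dense_sigmaProduct hκ _)
      _ ≤ #{s : Set K // #s < #K} * #A ^< #K := mk_sigmaProduct_le _ _
      _ ≤ #K ^< #K * #K ^< #K := mul_le_mul' (mk_subset_mk_lt_le_powerlt K) hAK
      _ = 2 ^< #K := by
          rw [← hAK_eq, ← h2A_eq, mul_eq_self (hκ.trans (le_two_powerlt _))]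
  · exact h2A_eq ▸ @le_dens _ (boxTopology _ _) _ fun D hD => powerlt_le_mk_of_dense le_rfl hD
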